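/- Let S = (I, M, O) be a correlation scenario. For every collection M' = (M'_i)_{i∈I} of subsets M'_i ⊆ M_i, the extreme points satisfy the chain of inclusions Ext(B(S)) ⊆ Ext(PD(S, M')) ⊆ Ext(NS(S)). -/

import Mathlib

open scoped Classical
open MeasureTheory

noncomputable section

/-- A correlation scenario `S = (I, M, O)`: a finite set `I` of parties, for each party `i`
a finite nonempty set `M i` of inputs, and for each input `x : M i` a finite set `O i x`
of outputs with at least two elements. -/
structure Scenario where
  I : Type
  M : I → Type
  O : (i : I) → M i → Type
  fI : Fintype I
  fM : ∀ i, Fintype (M i)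
  fO : ∀ i x, Fintype (O i x)
  hM : ∀ i, Nonempty (M i)
  hO : ∀ i x, 2 ≤ Fintype.card (O i x)

attribute [instance] Scenario.fI Scenario.fM Scenario.fO Scenario.hM

instance Scenario.instNonemptyO (S : Scenario) (i : S.I) (x : S.M i) : Nonempty (S.O i x) :=
  Fintype.card_pos_iff.mp (by have := S.hO i x; omega)

/-- Input strings of a scenario. -/
abbrev InputString (S : Scenario) := ∀ i, S.M i

/-- Output strings for a given input string. -/
abbrev OutputString (S : Scenario) (x : InputString S) := ∀ i, S.O i (x i)

/-- The ambient real vector space with one coordinate `℘(a|x)` for each pair of an input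
string `x` and an output string `a`. -/
abbrev Behaviour (S : Scenario) := (x : InputString S) → OutputString S x → ℝ

/-- `p` is a behaviour: each `p x` is a probability distribution on output strings. -/
def IsBehaviour (S : Scenario) (p : Behaviour S) : Prop :=
  (∀ x a, 0 ≤ p x a) ∧ ∀ x, ∑ a, p x a = 1

/-- The marginal `℘(a_V | x)` of a behaviour on the set `V` of parties, evaluated at the
restriction of `a` to `V`. -/
def marg (S : Scenario) (p : Behaviour S) (x : InputString S) (V : Set S.I)
    (a : OutputString S x) : ℝ :=
  ∑ b : OutputString S x, if ∀ i ∈ V, b i = a i then p x b else 0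

/-- No-signalling: replacing the input of party `i` (all other inputs fixed) leaves the
marginal on `I ∖ {i}` unchanged. -/
def NoSignalling (S : Scenario) (p : Behaviour S) : Prop :=
  ∀ (i : S.I) (x : InputString S) (m : S.M i)
    (a : OutputString S x) (a' : OutputString S (Function.update x i m)),
    (∀ j, j ≠ i → HEq (a j) (a' j)) →
    marg S p x {i}ᶜ a = marg S p (Function.update x i m) {i}ᶜ a'

/-- The set `NS(S)` of no-signalling behaviours. -/
def NSset (S : Scenario) : Set (Behaviour S) :=
  {p | IsBehaviour S p ∧ NoSignalling S p}

/-- A behaviour is predictable if all its probabilities are `0` or `1`. -/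
def Predictable (S : Scenario) (p : Behaviour S) : Prop :=
  ∀ x a, p x a = 0 ∨ p x a = 1

/-- The set `P_NS(S)` of predictable no-signalling behaviours. -/
def PNS (S : Scenario) : Set (Behaviour S) :=
  {p | IsBehaviour S p ∧ NoSignalling S p ∧ Predictable S p}

/-- The Bell-local polytope `B(S) = conv(P_NS(S))`. -/
def BellSet (S : Scenario) : Set (Behaviour S) :=
  convexHull ℝ (PNS S)

/-- `F_x = {i : x i ∈ M' i}`, the context-dependent set of parties choosing an input in the
distinguished collection `M'`. -/
def Fup (S : Scenario) (M' : ∀ i, Set (S.M i)) (x : InputString S) : Set S.I :=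
  {i | x i ∈ M' i}

/-- Partial predictability w.r.t. the collection `M'`: every marginal on a subset of `F_x`
is `{0,1}`-valued. -/
def PartPredictable (S : Scenario) (M' : ∀ i, Set (S.M i)) (p : Behaviour S) : Prop :=
  ∀ (x : InputString S) (V : Set S.I), V ⊆ Fup S M' x →
    ∀ a, marg S p x V a = 0 ∨ marg S p x V a = 1

/-- The set `PP(S, M')` of behaviours partially predictable w.r.t. `M'`. -/
def PPset (S : Scenario) (M' : ∀ i, Set (S.M i)) : Set (Behaviour S) :=
  {p | IsBehaviour S p ∧ PartPredictable S M' p}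

/-- The set `PP_NS(S, M')` of partially predictable no-signalling behaviours. -/
def PPNS (S : Scenario) (M' : ∀ i, Set (S.M i)) : Set (Behaviour S) :=
  {p | IsBehaviour S p ∧ NoSignalling S p ∧ PartPredictable S M' p}

/-- The partially deterministic polytope `PD(S, M') = conv(PP_NS(S, M'))`. -/
def PD (S : Scenario) (M' : ∀ i, Set (S.M i)) : Set (Behaviour S) :=
  convexHull ℝ (PPNS S M')

/-- The restricted scenario `S_{|M'}`: parties `{i : M' i ≠ ∅}`, input sets `M' i`, same
output sets. -/
def Scenario.restrict (S : Scenario) (M' : ∀ i, Set (S.M i)) : Scenario where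
  I := {i : S.I // (M' i).Nonempty}
  M := fun i => ↥(M' i.1)
  O := fun i x => S.O i.1 x.1
  fI := Subtype.fintype _
  fM := fun i => (Set.toFinite (M' i.1)).fintype
  fO := fun i x => S.fO i.1 x.1
  hM := fun i => i.2.to_subtype
  hO := fun i x => S.hO i.1 x.1

/-- A bipartition `(S_{|M'}, S_{|M'^⊥})` is nonredundant unless `M'` is everything or nothing. -/
def Nonredundant (S : Scenario) (M' : ∀ i, Set (S.M i)) : Prop :=
  ¬ (∀ i, M' i = Set.univ) ∧ ¬ (∀ i, M' i = (∅ : Set (S.M i)))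

/-- Extension of an input string of `S` to an input string of the restricted scenario
`S_{|M'}` (choosing arbitrary inputs for the parties `i` with `x i ∉ M' i`). -/
def extendInput (S : Scenario) (M' : ∀ i, Set (S.M i)) (x : InputString S) :
    InputString (S.restrict M') :=
  fun i => if h : x i.1 ∈ M' i.1 then ⟨x i.1, h⟩ else ⟨i.2.some, i.2.some_mem⟩

/-- Extension of an output string of `S` to an output string of the restricted scenario
`S_{|M'}` at the extended input string. -/
def extendOutput (S : Scenario) (M' : ∀ i, Set (S.M i)) (x : InputString S)
    (a : OutputString S x) : OutputString (S.restrict M') (extendInput S M' x) :=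
  fun i =>
    if h : x i.1 ∈ M' i.1 then
      cast (congrArg (S.O i.1)
        (show x i.1 = (extendInput S M' x i).1 by
          unfold extendInput
          first
            | exact (congrArg Subtype.val (dif_pos h)).symm
            | (split <;> first | rfl | exact absurd h ‹_›)
            | simp [h]))
        (a i.1)
    else Classical.arbitrary _

/-- The behaviour product `℘' ⊙ ℘'^⊥` of behaviours on the two halves `S' = S_{|M'}` and
`S'^⊥ = S_{|M'^⊥}` of a disjoint bipartition of `S`:
`(℘'⊙℘'^⊥)(a|x) = ℘'(a_{F_x}|x_{F_x}) · ℘'^⊥(a_{I∖F_x}|x_{I∖F_x})`, the factors being the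
corresponding marginals (well defined for no-signalling behaviours). -/
def bprod (S : Scenario) (M' : ∀ i, Set (S.M i))
    (p' : Behaviour (S.restrict M'))
    (p'' : Behaviour (S.restrict fun i => (M' i)ᶜ)) :
    Behaviour S :=
  fun x a =>
    marg (S.restrict M') p' (extendInput S M' x)
        {i : (S.restrict M').I | x i.1 ∈ M' i.1} (extendOutput S M' x a) *
    marg (S.restrict fun i => (M' i)ᶜ) p'' (extendInput S (fun i => (M' i)ᶜ) x)
        {i : (S.restrict fun i => (M' i)ᶜ).I | x i.1 ∈ (M' i.1)ᶜ}
        (extendOutput S (fun i => (M' i)ᶜ) x a)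

/-- The product `K' ⊙ K''` of two sets of behaviours on the halves of a bipartition. -/
def bprodSet (S : Scenario) (M' : ∀ i, Set (S.M i))
    (K' : Set (Behaviour (S.restrict M')))
    (K'' : Set (Behaviour (S.restrict fun i => (M' i)ᶜ))) :
    Set (Behaviour S) :=
  Set.image2 (bprod S M') K' K''

end

noncomputable section

/-- Auxiliary facts. -/

lemma marg_nonneg' (S : Scenario) (p : Behaviour S) (hp : IsBehaviour S p)
    (x : InputString S) (V : Set S.I) (a : OutputString S x) :
    0 ≤ marg S p x V a := by
  apply Finset.sum_nonneg
  intro b _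
  split_ifs
  · exact hp.1 x b
  · exact le_rfl

lemma marg_le_one' (S : Scenario) (p : Behaviour S) (hp : IsBehaviour S p)
    (x : InputString S) (V : Set S.I) (a : OutputString S x) :
    marg S p x V a ≤ 1 := by
  calc marg S p x V a ≤ ∑ b : OutputString S x, p x b := by
        apply Finset.sum_le_sum
        intro b _
        split_ifs
        · exact le_rfl
        · exact hp.1 x b
    _ = 1 := hp.2 x

lemma marg_combo (S : Scenario) (p q : Behaviour S) (c d : ℝ)
    (x : InputString S) (V : Set S.I) (a : OutputString S x) :
    marg S (c • p + d • q) x V a = c * marg S p x V a + d * marg S q x V a := by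
  unfold marg
  rw [Finset.mul_sum, Finset.mul_sum, ← Finset.sum_add_distrib]
  apply Finset.sum_congr rfl
  intro b _
  split_ifs with h
  · simp [mul_add]
  · simp

lemma zero_one_combo {t u v c d : ℝ} (hc : 0 < c) (hd : 0 < d) (hcd : c + d = 1)
    (hu0 : 0 ≤ u) (hu1 : u ≤ 1) (hv0 : 0 ≤ v) (hv1 : v ≤ 1)
    (ht : t = 0 ∨ t = 1) (heq : c * u + d * v = t) : u = t ∧ v = t := by
  rcases ht with ht | ht <;> subst ht <;> constructor <;> nlinarith

lemma coord_le_one (S : Scenario) (p : Behaviour S) (hp : IsBehaviour S p)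
    (x : InputString S) (a : OutputString S x) : p x a ≤ 1 := by
  calc p x a ≤ ∑ b : OutputString S x, p x b :=
        Finset.single_le_sum (fun b _ => hp.1 x b) (Finset.mem_univ a)
    _ = 1 := hp.2 x

lemma ns_convex (S : Scenario) : Convex ℝ (NSset S) := by
  intro q hq r hr c d hc hd hcd
  refine ⟨⟨fun x a => ?_, fun x => ?_⟩, ?_⟩
  · have := hq.1.1 x a
    have := hr.1.1 x a
    simp only [Pi.add_apply, Pi.smul_apply, smul_eq_mul]
    nlinarith
  · simp only [Pi.add_apply, Pi.smul_apply, smul_eq_mul]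
    rw [Finset.sum_add_distrib, ← Finset.mul_sum, ← Finset.mul_sum,
      hq.1.2 x, hr.1.2 x]
    linarith
  · intro i x m a a' hja
    rw [marg_combo, marg_combo, hq.2 i x m a a' hja, hr.2 i x m a a' hja]

lemma pred_part_pred (S : Scenario) (p : Behaviour S) (hp : IsBehaviour S p)
    (hpred : Predictable S p) (M' : ∀ i, Set (S.M i)) :
    PartPredictable S M' p := by
  intro x V _ a
  by_cases hall : ∀ b : OutputString S x, (∀ i ∈ V, b i = a i) → p x b = 0
  · left
    apply Finset.sum_eq_zero
    intro b _
    split_ifs with h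
    · exact hall b h
    · rfl
  · right
    push_neg at hall
    obtain ⟨b, hb, hb0⟩ := hall
    have hb1 : p x b = 1 := (hpred x b).resolve_left hb0
    have h1 : (1 : ℝ) ≤ marg S p x V a := by
      calc (1 : ℝ) = (if ∀ i ∈ V, b i = a i then p x b else 0) := by
            rw [if_pos hb, hb1]
        _ ≤ marg S p x V a := by
            apply Finset.single_le_sum (f := fun c : OutputString S x =>
              if ∀ i ∈ V, c i = a i then p x c else 0) (fun c _ => ?_)
              (Finset.mem_univ b)
            split_ifs
            · exact hp.1 x c
            · exact le_rfl
    exact le_antisymm (marg_le_one' S p hp x V a) h1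

lemma pns_subset_ppns (S : Scenario) (M' : ∀ i, Set (S.M i)) :
    PNS S ⊆ PPNS S M' := by
  rintro p ⟨hb, hns, hpred⟩
  exact ⟨hb, hns, pred_part_pred S p hb hpred M'⟩

lemma ppns_subset_ns (S : Scenario) (M' : ∀ i, Set (S.M i)) :
    PPNS S M' ⊆ NSset S := by
  rintro p ⟨hb, hns, _⟩
  exact ⟨hb, hns⟩

/-- Every predictable no-signalling behaviour is an extreme point of `NS(S)`. -/
lemma pns_extreme (S : Scenario) (p : Behaviour S) (hp : p ∈ PNS S) :
    p ∈ Set.extremePoints ℝ (NSset S) := by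
  obtain ⟨hb, hns, hpred⟩ := hp
  refine ⟨⟨hb, hns⟩, ?_⟩
  rintro q hq r hr hseg
  obtain ⟨c, d, hc, hd, hcd, heq⟩ := hseg
  have key : ∀ x a, q x a = p x a ∧ r x a = p x a := by
    intro x a
    have hcoord : c * q x a + d * r x a = p x a := by
      rw [← heq]; simp [smul_eq_mul]
    exact zero_one_combo hc hd hcd (hq.1.1 x a) (coord_le_one S q hq.1 x a)
      (hr.1.1 x a) (coord_le_one S r hr.1 x a) (hpred x a) hcoord
  funext x a
  exact (key x a).1

/-- Decompositions in `NS` of a partially predictable behaviour stay partially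
predictable. -/
lemma ppns_decomp (S : Scenario) (M' : ∀ i, Set (S.M i)) (p q r : Behaviour S)
    (hp : p ∈ PPNS S M') (hq : q ∈ NSset S) (hr : r ∈ NSset S)
    {c d : ℝ} (hc : 0 < c) (hd : 0 < d) (hcd : c + d = 1)
    (heq : c • q + d • r = p) : q ∈ PPNS S M' ∧ r ∈ PPNS S M' := by
  obtain ⟨hb, hns, hpp⟩ := hp
  have hmarg : ∀ (x : InputString S) (V : Set S.I), V ⊆ Fup S M' x →
      ∀ a, marg S q x V a = marg S p x V a ∧ marg S r x V a = marg S p x V a := by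
    intro x V hV a
    have hcomb : c * marg S q x V a + d * marg S r x V a = marg S p x V a := by
      rw [← heq, marg_combo]
    exact zero_one_combo hc hd hcd (marg_nonneg' S q hq.1 x V a)
      (marg_le_one' S q hq.1 x V a) (marg_nonneg' S r hr.1 x V a)
      (marg_le_one' S r hr.1 x V a) (hpp x V hV a) hcomb
  refine ⟨⟨hq.1, hq.2, fun x V hV a => ?_⟩, ⟨hr.1, hr.2, fun x V hV a => ?_⟩⟩
  · rw [(hmarg x V hV a).1]; exact hpp x V hV a
  · rw [(hmarg x V hV a).2]; exact hpp x V hV a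

/-- The chain of inclusions of extreme points:
`Ext(B(S)) ⊆ Ext(PD(S, M')) ⊆ Ext(NS(S))`. -/
theorem ext_bell_subset_ext_pd_subset_ext_ns (S : Scenario) [Nonempty S.I]
    (M' : ∀ i, Set (S.M i)) :
    Set.extremePoints ℝ (BellSet S) ⊆ Set.extremePoints ℝ (PD S M') ∧
    Set.extremePoints ℝ (PD S M') ⊆ Set.extremePoints ℝ (NSset S) := by
  have hPDsubNS : PD S M' ⊆ NSset S :=
    convexHull_min (ppns_subset_ns S M') (ns_convex S)
  constructor
  · intro p hp
    have hPNS : p ∈ PNS S := extremePoints_convexHull_subset hp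
    have hExtNS : p ∈ Set.extremePoints ℝ (NSset S) := pns_extreme S p hPNS
    refine ⟨subset_convexHull ℝ _ (pns_subset_ppns S M' hPNS), ?_⟩
    intro q hq r hr hseg
    exact hExtNS.2 (hPDsubNS hq) (hPDsubNS hr) hseg
  · intro p hp
    have hPPNS : p ∈ PPNS S M' := extremePoints_convexHull_subset hp
    refine ⟨ppns_subset_ns S M' hPPNS, ?_⟩
    intro q hq r hr hseg
    obtain ⟨c, d, hc, hd, hcd, heq⟩ := hseg
    have hqr := ppns_decomp S M' p q r hPPNS hq hr hc hd hcd heq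
    exact hp.2 (subset_convexHull ℝ _ hqr.1) (subset_convexHull ℝ _ hqr.2)
      ⟨c, d, hc, hd, hcd, heq⟩

end
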